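/- arXiv:2205.04776 — 2 statements merged into one kernel-verified Lean document; each statement's English description precedes it below -/
import Mathlib

section
/- Let d ≥ 1, r ≥ 2, and let P_1,...,P_r be pairwise disjoint finite subsets of ℝ^d. Then ⋂_{i=1}^r conv(P_i) ≠ ∅ if and only if there exist subsets P_i' ⊆ P_i for each i ∈ [r] such that ⋂_{i=1}^r conv(P_i') ≠ ∅ and Σ_{i=1}^r |P_i'| ≤ (d+1)(r−1)+1. -/
open Finset

/-- Points of `ℝ^d`. -/
abbrev Pt (d : ℕ) := Fin d → ℝ

/-- `W` is a `d`-colorful word on alphabet `σ`: it has length `(d+1)(|σ|-1)+1`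
(length `0` if `σ = ∅`), and each of the `d+1` blocks of consecutive positions
`i(|σ|-1), …, i(|σ|-1)+|σ|-1` (0-indexed, `0 ≤ i ≤ d`) contains every letter of `σ`
exactly once. -/
def IsColorfulWord {α : Type*} [DecidableEq α] (d : ℕ) (σ : Finset α) (W : List α) : Prop :=
  W.length = (d + 1) * (σ.card - 1) + min σ.card 1 ∧
    ∀ i ≤ d, ∀ a ∈ σ, ((W.drop (i * (σ.card - 1))).take σ.card).count a = 1

/-- `W` contains a `d`-colorful subword on alphabet `σ`. -/
def ContainsColorful {α : Type*} [DecidableEq α] (d : ℕ) (σ : Finset α) (W : List α) : Prop :=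
  ∃ W' : List α, W'.Sublist W ∧ IsColorfulWord d σ W'

/-- A complex `Δ` on vertex set `V` is `d`-colorfully representable. -/
def ColorfullyRep {V : Type*} [DecidableEq V] (d : ℕ) (Δ : Set (Finset V)) : Prop :=
  ∃ W : List V, ∀ σ : Finset V, σ ∈ Δ ↔ ContainsColorful d σ W

/-- A finite point set in `ℝ^d` is in general position: every subset of at most `d+1`
points is affinely independent. -/
def GenPos {d : ℕ} (P : Finset (Pt d)) : Prop :=
  ∀ S : Finset (Pt d), S ⊆ P → S.card ≤ d + 1 →
    AffineIndependent ℝ (fun x : (S : Set (Pt d)) => (x : Pt d))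

/-- Pairwise disjoint finite sets `Q 1, …, Q n` induce the complex `Δ`:
for every `σ ⊆ [n]`, the convex hulls of the `Q i`, `i ∈ σ`, have a common point
iff `σ ∈ Δ`. -/
def Induces {d n : ℕ} (Δ : Set (Finset (Fin n))) (Q : Fin n → Finset (Pt d)) : Prop :=
  (∀ i j : Fin n, i ≠ j → Disjoint (Q i) (Q j)) ∧
    ∀ σ : Finset (Fin n), (⋂ i ∈ σ, convexHull ℝ ((Q i : Set (Pt d)))).Nonempty ↔ σ ∈ Δ

/-- `Δ` is weakly `d`-Tverberg. -/
def WeaklyTverberg (d : ℕ) {n : ℕ} (Δ : Set (Finset (Fin n))) : Prop :=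
  ∃ C : ℕ, ∀ P : Finset (Pt d), GenPos P → C ≤ P.card →
    ∃ Q : Fin n → Finset (Pt d), (∀ i, Q i ⊆ P) ∧ Induces Δ Q

/-- `Δ` is `d`-Tverberg: the inducing sets can be chosen to partition all of `P`. -/
def IsTverberg (d : ℕ) {n : ℕ} (Δ : Set (Finset (Fin n))) : Prop :=
  ∃ C : ℕ, ∀ P : Finset (Pt d), GenPos P → C ≤ P.card →
    ∃ Q : Fin n → Finset (Pt d), (∀ i, Q i ⊆ P) ∧ (∀ x ∈ P, ∃ i, x ∈ Q i) ∧ Induces Δ Q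

/-- Strong general position. -/
def StrongGenPos {d : ℕ} (P : Finset (Pt d)) : Prop :=
  ∀ r : ℕ, 2 ≤ r → ∀ Q : Fin r → Finset (Pt d),
    (∀ i, Q i ⊆ P) → (∀ i, (Q i).Nonempty) →
    (∀ i j, i ≠ j → Disjoint (Q i) (Q j)) →
    (⨅ i, affineSpan ℝ ((Q i : Set (Pt d)))) = ⊥ ∨
      (Module.finrank ℝ (⨅ i, affineSpan ℝ ((Q i : Set (Pt d)))).direction : ℤ) =
        (∑ i, (Module.finrank ℝ (affineSpan ℝ ((Q i : Set (Pt d)))).direction : ℤ)) -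
          (d : ℤ) * ((r : ℤ) - 1)

/-- `σ` is a facet (maximal face) of `Δ`. -/
def IsFacet {n : ℕ} (Δ : Set (Finset (Fin n))) (σ : Finset (Fin n)) : Prop :=
  σ ∈ Δ ∧ ∀ τ ∈ Δ, σ ⊆ τ → σ = τ

/-- The simplicial complex associated to a graph: the empty set, the vertex singletons,
and the edges. -/
def graphComplex {V : Type*} (G : SimpleGraph V) : Set (Finset V) :=
  {σ : Finset V | σ.card ≤ 2 ∧ ∀ a ∈ σ, ∀ b ∈ σ, a ≠ b → G.Adj a b}

/-- The disjoint subsequences of `p` indexed by `T` form a Tverberg partition. -/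
def TvPt {d m r : ℕ} (p : Fin m → Pt d) (T : Fin r → Finset (Fin m)) : Prop :=
  (⋂ i : Fin r, convexHull ℝ (p '' (T i : Set (Fin m)))).Nonempty

/-- A minimal Tverberg partition: deleting any single point destroys the common point. -/
def MinTv {d m r : ℕ} (p : Fin m → Pt d) (T : Fin r → Finset (Fin m)) : Prop :=
  TvPt p T ∧ ∀ i : Fin r, ∀ x ∈ T i, ¬ TvPt p (fun j => (T j).erase x)

/-- The word on alphabet `{1,…,r}` associated to disjoint subsequences `T` of a sequence
of length `m`: each index belonging to `T i` is replaced by the letter `i`, read in order. -/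

noncomputable def Lmap {d m : ℕ} (Q : Fin (m+2) → Finset (Pt d)) :
    (∀ i, ↥(Q i) → ℝ) →ₗ[ℝ] ((Fin (m+2) → ℝ) × (Fin (m+1) → Pt d)) where
  toFun f := (fun i => ∑ p : ↥(Q i), f i p,
    fun j => (∑ p : ↥(Q j.succ), f j.succ p • (p : Pt d)) - ∑ p : ↥(Q 0), f 0 p • (p : Pt d))
  map_add' f g := by
    simp only [Prod.mk_add_mk, Prod.mk.injEq]
    constructor
    · funext i; simp [Finset.sum_add_distrib]
    · funext j; simp only [Pi.add_apply, add_smul, Finset.sum_add_distrib]; abel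
  map_smul' a f := by
    refine Prod.ext ?_ ?_ <;> funext x <;>
      simp [Finset.mul_sum, Finset.smul_sum, smul_smul, smul_sub]

lemma reduce {d m : ℕ} (Q : Fin (m+2) → Finset (Pt d))
    (hne : (⋂ i, convexHull ℝ ((Q i : Set (Pt d)))).Nonempty)
    (hcard : (m + 2) + (m + 1) * d < ∑ i, (Q i).card) :
    ∃ Q' : Fin (m+2) → Finset (Pt d), (∀ i, Q' i ⊆ Q i) ∧
      (⋂ i, convexHull ℝ ((Q' i : Set (Pt d)))).Nonempty ∧
      ∑ i, (Q' i).card < ∑ i, (Q i).card := by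
  classical
  obtain ⟨y, hy⟩ := hne
  simp only [Set.mem_iInter] at hy
  have hw : ∀ i, ∃ w : Pt d → ℝ, (∀ p ∈ Q i, 0 ≤ w p) ∧ ∑ p ∈ Q i, w p = 1 ∧
      ∑ p ∈ Q i, w p • p = y := by
    intro i
    have := hy i
    rw [Finset.convexHull_eq] at this
    obtain ⟨w, h0, h1, h2⟩ := this
    exact ⟨w, h0, h1, by
      rw [Finset.centerMass_eq_of_sum_1 _ _ h1] at h2
      simpa using h2⟩
  choose w hw0 hw1 hw2 using hw
  set v : ∀ i, ↥(Q i) → ℝ := fun i p => w i ↑p with hv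
  have hv1 : ∀ i, ∑ p : ↥(Q i), v i p = 1 := by
    intro i; rw [← hw1 i]; exact Finset.sum_coe_sort (Q i) (w i)
  have hv2 : ∀ i, ∑ p : ↥(Q i), v i p • (p : Pt d) = y := by
    intro i; rw [← hw2 i]; exact Finset.sum_coe_sort (Q i) (fun p => w i p • p)
  have hrank : Module.finrank ℝ ((Fin (m+2) → ℝ) × (Fin (m+1) → Pt d)) <
      Module.finrank ℝ (∀ i, ↥(Q i) → ℝ) := by
    have h1 : Module.finrank ℝ (∀ i, ↥(Q i) → ℝ) = ∑ i, (Q i).card := by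
      rw [Module.finrank_pi_fintype]; simp [Module.finrank_pi]
    have h2 : Module.finrank ℝ ((Fin (m+2) → ℝ) × (Fin (m+1) → Pt d)) = (m+2) + (m+1)*d := by
      simp [Module.finrank_prod, Module.finrank_pi, Module.finrank_pi_fintype]
    omega
  have hni : ¬ Function.Injective (Lmap Q) := by
    intro h
    exact absurd (LinearMap.finrank_le_finrank_of_injective h) (by omega)
  rw [Function.not_injective_iff] at hni
  obtain ⟨a, b, hab, hne'⟩ := hni
  set μ : ∀ i, ↥(Q i) → ℝ := a - b with hμ
  have hμ0 : Lmap Q μ = 0 := by rw [hμ, map_sub, hab, sub_self]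
  have hμne : μ ≠ 0 := sub_ne_zero.mpr hne'
  have hker1 : ∀ i, ∑ p : ↥(Q i), μ i p = 0 := by
    intro i
    have := congrFun (congrArg Prod.fst hμ0) i
    simpa [Lmap] using this
  have hker2 : ∀ i, ∑ p : ↥(Q i), μ i p • (p : Pt d) = ∑ p : ↥(Q 0), μ 0 p • (p : Pt d) := by
    intro i
    induction i using Fin.cases with
    | zero => rfl
    | succ j =>
      have := congrFun (congrArg Prod.snd hμ0) j
      simp only [Lmap, LinearMap.coe_mk, AddHom.coe_mk, Prod.snd_zero, Pi.zero_apply] at this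
      exact sub_eq_zero.mp this
  have hneg : ∃ x : Σ i : Fin (m+2), ↥(Q i), μ x.1 x.2 < 0 := by
    by_contra hc
    push_neg at hc
    apply hμne
    funext i p
    have hz := Finset.sum_eq_zero_iff_of_nonneg (fun p _ => hc ⟨i, p⟩) |>.mp (hker1 i)
    exact hz p (Finset.mem_univ p)
  set negs : Finset (Σ i : Fin (m+2), ↥(Q i)) :=
    Finset.univ.filter (fun x => μ x.1 x.2 < 0) with hnegs
  have hnegs_ne : negs.Nonempty := by
    obtain ⟨x, hx⟩ := hneg
    exact ⟨x, by simp [hnegs, hx]⟩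
  obtain ⟨x0, hx0mem, hx0min⟩ :=
    Finset.exists_min_image negs (fun x => v x.1 x.2 / (-(μ x.1 x.2))) hnegs_ne
  have hx0neg : μ x0.1 x0.2 < 0 := by simpa [hnegs] using hx0mem
  set t : ℝ := v x0.1 x0.2 / (-(μ x0.1 x0.2)) with ht
  have ht0 : 0 ≤ t := div_nonneg (hw0 _ _ x0.2.2) (by linarith)
  set w' : ∀ i, ↥(Q i) → ℝ := fun i p => v i p + t * μ i p with hw'
  have hw'0 : ∀ i (p : ↥(Q i)), 0 ≤ w' i p := by
    intro i p
    rcases le_or_gt 0 (μ i p) with h | h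
    · simp only [hw']
      nlinarith [hw0 i ↑p p.2, mul_nonneg ht0 h]
    · have hmem : (⟨i, p⟩ : Σ i : Fin (m+2), ↥(Q i)) ∈ negs := by simp [hnegs, h]
      have hle : t ≤ v i p / (-(μ i p)) := hx0min _ hmem
      rw [le_div_iff₀ (by linarith)] at hle
      simp only [hw']
      nlinarith
  have hw'1 : ∀ i, ∑ p : ↥(Q i), w' i p = 1 := by
    intro i
    simp only [hw', Finset.sum_add_distrib, ← Finset.mul_sum, hker1, hv1, mul_zero, add_zero]
  set z : Pt d := y + t • ∑ p : ↥(Q 0), μ 0 p • (p : Pt d) with hz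
  have hw'2 : ∀ i, ∑ p : ↥(Q i), w' i p • (p : Pt d) = z := by
    intro i
    simp only [hw', add_smul, Finset.sum_add_distrib, hv2, mul_smul, ← Finset.smul_sum,
      hker2, hz]
  have hx0zero : w' x0.1 x0.2 = 0 := by
    have hμn : μ x0.1 x0.2 ≠ 0 := ne_of_lt hx0neg
    have h1 : v x0.1 x0.2 / -μ x0.1 x0.2 * μ x0.1 x0.2 = - v x0.1 x0.2 := by
      rw [div_mul_eq_mul_div, mul_div_assoc, div_neg, div_self hμn, mul_neg_one]
    simp only [hw']
    rw [ht]
    linarith [h1]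
  set Q' : Fin (m+2) → Finset (Pt d) := fun i =>
    if i = x0.1 then (Q x0.1).erase ↑x0.2 else Q i with hQ'
  have hsub : ∀ i, Q' i ⊆ Q i := by
    intro i
    by_cases h : i = x0.1
    · subst h; simp only [hQ', if_pos rfl]; exact Finset.erase_subset _ _
    · simp [hQ', h]
  have hezero : w' x0.1 x0.2 • (x0.2 : Pt d) = 0 := by rw [hx0zero, zero_smul]
  refine ⟨Q', hsub, ⟨z, ?_⟩, ?_⟩
  · rw [Set.mem_iInter]
    intro i
    by_cases h : i = x0.1
    · subst h
      have hsum : ∑ p ∈ Finset.univ.erase x0.2, w' x0.1 p = 1 := by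
        rw [Finset.sum_erase _ hx0zero, hw'1]
      have key : (Finset.univ.erase x0.2).centerMass (w' x0.1) (fun p : ↥(Q x0.1) => (p : Pt d))
          ∈ convexHull ℝ ((Q' x0.1 : Set (Pt d))) := by
        apply Finset.centerMass_mem_convexHull
        · intro p _; exact hw'0 _ p
        · rw [hsum]; norm_num
        · intro p hp
          have hpne : p ≠ x0.2 := (Finset.mem_erase.mp hp).1
          simp only [hQ', if_pos rfl, Finset.coe_erase, Set.mem_diff, Set.mem_singleton_iff]
          exact ⟨p.2, fun hc => hpne (Subtype.ext hc)⟩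
      have hcm : (Finset.univ.erase x0.2).centerMass (w' x0.1)
          (fun p : ↥(Q x0.1) => (p : Pt d)) = z := by
        rw [Finset.centerMass_eq_of_sum_1 _ _ hsum]
        have hstep : ∑ p ∈ Finset.univ.erase x0.2, w' x0.1 p • (p : Pt d)
            = ∑ p : ↥(Q x0.1), w' x0.1 p • (p : Pt d) :=
          Finset.sum_erase _ (by rw [hx0zero, zero_smul])
        rw [hstep]
        exact hw'2 x0.1
      rwa [hcm] at key
    · have key : (Finset.univ : Finset ↥(Q i)).centerMass (w' i) (fun p : ↥(Q i) => (p : Pt d))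
          ∈ convexHull ℝ ((Q' i : Set (Pt d))) := by
        apply Finset.centerMass_mem_convexHull
        · intro p _; exact hw'0 _ p
        · rw [hw'1]; norm_num
        · intro p _
          simp [hQ', h, p.2]
      have hcm : (Finset.univ : Finset ↥(Q i)).centerMass (w' i)
          (fun p : ↥(Q i) => (p : Pt d)) = z := by
        rw [Finset.centerMass_eq_of_sum_1 _ _ (hw'1 i)]
        exact hw'2 i
      rwa [hcm] at key
  · apply Finset.sum_lt_sum
    · intro i _; exact Finset.card_le_card (hsub i)
    · refine ⟨x0.1, Finset.mem_univ _, ?_⟩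
      simp only [hQ', if_pos rfl]
      exact Finset.card_erase_lt_of_mem x0.2.2


lemma shrink {d m : ℕ} (n : ℕ) (Q : Fin (m+2) → Finset (Pt d))
    (hn : ∑ i, (Q i).card = n)
    (hne : (⋂ i, convexHull ℝ ((Q i : Set (Pt d)))).Nonempty) :
    ∃ Q' : Fin (m+2) → Finset (Pt d), (∀ i, Q' i ⊆ Q i) ∧
      (⋂ i, convexHull ℝ ((Q' i : Set (Pt d)))).Nonempty ∧
      ∑ i, (Q' i).card ≤ (m + 2) + (m + 1) * d := by
  induction n using Nat.strong_induction_on generalizing Q with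
  | _ n ih =>
    rcases le_or_gt (∑ i, (Q i).card) ((m + 2) + (m + 1) * d) with h | h
    · exact ⟨Q, fun _ => subset_rfl, hne, h⟩
    · obtain ⟨Q', hsub, hne', hlt⟩ := reduce Q hne h
      obtain ⟨Q'', h1, h2, h3⟩ := ih (∑ i, (Q' i).card) (hn ▸ hlt) Q' rfl hne'
      exact ⟨Q'', fun i => (h1 i).trans (hsub i), h2, h3⟩


noncomputable def assocWord {m r : ℕ} (T : Fin r → Finset (Fin m)) : List (Fin r) :=
  (List.finRange m).filterMap (fun k =>
    if h : ∃ i, k ∈ T i then some h.choose else none)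

theorem statement17 (d r : ℕ) (hd : 1 ≤ d) (hr : 2 ≤ r)
    (P : Fin r → Finset (Pt d)) (hdisj : ∀ i j, i ≠ j → Disjoint (P i) (P j)) :
    (⋂ i : Fin r, convexHull ℝ ((P i : Set (Pt d)))).Nonempty ↔
      ∃ Q : Fin r → Finset (Pt d), (∀ i, Q i ⊆ P i) ∧
        (⋂ i : Fin r, convexHull ℝ ((Q i : Set (Pt d)))).Nonempty ∧
        ∑ i, (Q i).card ≤ (d + 1) * (r - 1) + 1 := by
  obtain ⟨m, rfl⟩ : ∃ m, r = m + 2 := ⟨r - 2, by omega⟩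
  have hbound : (m + 2) + (m + 1) * d = (d + 1) * (m + 2 - 1) + 1 := by
    have : m + 2 - 1 = m + 1 := by omega
    rw [this]; ring
  constructor
  · intro hne
    obtain ⟨Q, h1, h2, h3⟩ := shrink (∑ i, (P i).card) P rfl hne
    exact ⟨Q, h1, h2, by omega⟩
  · rintro ⟨Q, hQ, ⟨y, hy⟩, -⟩
    refine ⟨y, ?_⟩
    rw [Set.mem_iInter] at hy ⊢
    exact fun i => convexHull_mono (Finset.coe_subset.mpr (hQ i)) (hy i)
end

section
/- For all integers d ≥ 1 and r ≥ 2, every set of (d+1)(r−1)+1 points in ℝ^d can be partitioned into r pairwise disjoint parts P_1,...,P_r such that ⋂_{i=1}^r conv(P_i) ≠ ∅. -/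
open Finset

open Module


local notation "⟪" x ", " y "⟫" => @inner ℝ _ _ x y

lemma exists_swap_point {E : Type*} [NormedAddCommGroup E] [InnerProductSpace ℝ E]
    (p q : E) (hpq : p ≠ q) (X : Finset E) (hp : p ∈ convexHull ℝ (X : Set E)) :
    ∃ y ∈ X, ‖p - q‖ ^ 2 ≤ ⟪p - q, y - q⟫ := by
  classical
  rw [Finset.convexHull_eq] at hp
  obtain ⟨w, hw0, hw1, hwp⟩ := hp
  by_contra hcon
  push_neg at hcon
  have hx0 : ∃ x ∈ X, 0 < w x := by
    by_contra h
    push_neg at h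
    have : ∑ x ∈ X, w x = 0 :=
      Finset.sum_eq_zero fun x hx => le_antisymm (h x hx) (hw0 x hx)
    rw [hw1] at this; norm_num at this
  obtain ⟨x₀, hx₀X, hx₀⟩ := hx0
  have hpq' : p - q = ∑ x ∈ X, w x • (x - q) := by
    have : X.centerMass w id = ∑ x ∈ X, w x • x := by
      rw [Finset.centerMass_eq_of_sum_1 _ _ hw1]; rfl
    rw [hwp] at this
    rw [this]
    simp only [smul_sub]
    rw [Finset.sum_sub_distrib, ← Finset.sum_smul, hw1, one_smul]
  have hinner : ∑ x ∈ X, w x * ⟪p - q, x - q⟫ = ‖p - q‖ ^ 2 := by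
    calc ∑ x ∈ X, w x * ⟪p - q, x - q⟫ = ⟪p - q, ∑ x ∈ X, w x • (x - q)⟫ := by
          rw [inner_sum]
          exact Finset.sum_congr rfl fun x _ => (real_inner_smul_right _ _ _).symm
      _ = ⟪p - q, p - q⟫ := by rw [← hpq']
      _ = ‖p - q‖ ^ 2 := real_inner_self_eq_norm_sq _
  have hlt : ∑ x ∈ X, w x * ⟪p - q, x - q⟫ < ∑ x ∈ X, w x * ‖p - q‖ ^ 2 := by
    apply Finset.sum_lt_sum
    · intro i hi
      exact mul_le_mul_of_nonneg_left (le_of_lt (hcon i hi)) (hw0 i hi)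
    · exact ⟨x₀, hx₀X, by
        have := hcon x₀ hx₀X
        exact (mul_lt_mul_iff_right₀ hx₀).2 this⟩
  rw [hinner, ← Finset.sum_mul, hw1, one_mul] at hlt
  exact lt_irrefl _ hlt

set_option maxHeartbeats 1000000 in
lemma colorful_caratheodory {E : Type*} [NormedAddCommGroup E] [InnerProductSpace ℝ E]
    [FiniteDimensional ℝ E] {ι : Type*} [Fintype ι] [DecidableEq ι]
    (hcard : finrank ℝ E < Fintype.card ι)
    (X : ι → Finset E) (p : E) (hX : ∀ i, p ∈ convexHull ℝ ((X i : Set E))) :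
    ∃ f : ι → E, (∀ i, f i ∈ X i) ∧ p ∈ convexHull ℝ (Set.range f) := by
  classical
  have hXne : ∀ i, (X i).Nonempty := by
    intro i
    rw [Finset.nonempty_iff_ne_empty]
    rintro h
    have := hX i
    rw [h] at this
    simp at this
  have pick : ∀ i, ∃ x, x ∈ X i := fun i => hXne i
  choose pf hpf using pick
  haveI : Nonempty (∀ i, {x // x ∈ X i}) := ⟨fun i => ⟨pf i, hpf i⟩⟩
  haveI : Nonempty ι := Fintype.card_pos_iff.1 (by omega)
  set g : (∀ i, {x // x ∈ X i}) → ℝ :=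
    fun f => Metric.infDist p (convexHull ℝ (Set.range fun i => (f i : E))) with hg
  obtain ⟨f₀, hf₀⟩ := Finite.exists_min g
  set F : ι → E := fun i => (f₀ i : E) with hF
  refine ⟨F, fun i => (f₀ i).2, ?_⟩
  set K := convexHull ℝ (Set.range F) with hK
  have hKcomp : IsCompact K := (Set.finite_range F).isCompact_convexHull ℝ
  have hKne : K.Nonempty := (Set.range_nonempty F).mono (subset_convexHull ℝ _)
  obtain ⟨q, hqK, hq⟩ := hKcomp.exists_infDist_eq_dist hKne p
  have hKclosed : IsClosed K := hKcomp.isClosed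
  rw [hKclosed.mem_iff_infDist_zero hKne]
  by_contra hne0
  have hdpos : 0 < dist p q :=
    hq ▸ lt_of_le_of_ne Metric.infDist_nonneg (fun h => hne0 h.symm)
  have hpq : p ≠ q := fun h => by simp [h] at hdpos
  -- nearest point characterization
  have hproj : ∀ w ∈ K, ⟪p - q, w - q⟫ ≤ 0 := by
    rw [← norm_eq_iInf_iff_real_inner_le_zero (convex_convexHull ℝ _) hqK]
    rw [← dist_eq_norm, ← hq, Metric.infDist_eq_iInf]
    congr 1
    ext w
    rw [dist_eq_norm]
  -- Caratheodory with positive coefficients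
  obtain ⟨κ, hκfin, z, w, hzr, hai, hwpos, hwsum, hwz⟩ :=
    eq_pos_convex_span_of_mem_convexHull hqK
  haveI : Nonempty κ := by
    by_contra h
    rw [not_nonempty_iff] at h
    rw [Finset.sum_eq_zero (fun i _ => (h.elim i : False).elim)] at hwsum
    norm_num at hwsum
  have hzK : ∀ i, z i ∈ K := fun i =>
    subset_convexHull ℝ _ (hzr (Set.mem_range_self i))
  have hz0 : ∀ i, ⟪p - q, z i - q⟫ = 0 := by
    have hsum0 : ∑ i, w i * ⟪p - q, z i - q⟫ = 0 := by
      have : ∑ i, w i • (z i - q) = 0 := by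
        simp only [smul_sub, Finset.sum_sub_distrib, ← Finset.sum_smul, hwsum, hwz,
          one_smul, sub_self]
      calc ∑ i, w i * ⟪p - q, z i - q⟫ = ⟪p - q, ∑ i, w i • (z i - q)⟫ := by
            rw [inner_sum]
            exact Finset.sum_congr rfl fun i _ => (real_inner_smul_right _ _ _).symm
        _ = 0 := by rw [this, inner_zero_right]
    have hterm : ∀ i ∈ Finset.univ, w i * ⟪p - q, z i - q⟫ ≤ 0 := fun i _ =>
      mul_nonpos_of_nonneg_of_nonpos (hwpos i).le (hproj _ (hzK i))
    intro i
    have := (Finset.sum_eq_zero_iff_of_nonpos hterm).1 hsum0 i (Finset.mem_univ i)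
    rcases mul_eq_zero.1 this with h | h
    · exact absurd h (ne_of_gt (hwpos i))
    · exact h
  -- card bound
  set φ : E →ₗ[ℝ] ℝ := innerₗ E (p - q) with hφ
  set W : Submodule ℝ E := LinearMap.ker φ with hW
  have hWlt : W < ⊤ := by
    rw [lt_top_iff_ne_top]
    intro h
    have hmem : p - q ∈ W := h ▸ Submodule.mem_top
    have : ⟪p - q, p - q⟫ = (0:ℝ) := hmem
    rw [real_inner_self_eq_norm_sq] at this
    have : ‖p - q‖ = 0 := by nlinarith [norm_nonneg (p - q)]
    exact hpq (by rwa [norm_sub_eq_zero_iff] at this)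
  have hWrank : finrank ℝ W < finrank ℝ E := Submodule.finrank_lt hWlt.ne
  obtain ⟨i₀⟩ := (inferInstance : Nonempty κ)
  have hli : LinearIndependent ℝ fun i : {j : κ // j ≠ i₀} => z (i : κ) - z i₀ := by
    have := (affineIndependent_iff_linearIndependent_vsub ℝ z i₀).1 hai
    exact this
  have hmemW : ∀ i : {j : κ // j ≠ i₀}, z (i : κ) - z i₀ ∈ W := by
    intro i
    have h1 := hz0 (i : κ)
    have h2 := hz0 i₀
    show ⟪p - q, z (i : κ) - z i₀⟫ = 0
    have : z (i:κ) - z i₀ = (z (i:κ) - q) - (z i₀ - q) := by abel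
    rw [this, inner_sub_right, h1, h2, sub_zero]
  have hcardκ : Fintype.card κ ≤ finrank ℝ E := by
    set ψ : {j : κ // j ≠ i₀} → W := fun i => ⟨z (i : κ) - z i₀, hmemW i⟩ with hψ
    have hliψ : LinearIndependent ℝ ψ := by
      apply LinearIndependent.of_comp W.subtype
      exact hli
    have := hliψ.fintype_card_le_finrank
    have hcc : Fintype.card {j : κ // j ≠ i₀} = Fintype.card κ - 1 := by
      simp [Fintype.card_subtype_compl]
    omega
  -- choose unused index
  have hchoice : ∀ i : κ, ∃ j : ι, F j = z i := fun i => hzr (Set.mem_range_self i)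
  choose c hc using hchoice
  have hused : (Finset.image c Finset.univ).card < Finset.univ.card (α := ι) := by
    calc (Finset.image c Finset.univ).card ≤ Finset.univ.card (α := κ) := Finset.card_image_le
      _ ≤ finrank ℝ E := by rwa [Finset.card_univ]
      _ < Fintype.card ι := hcard
      _ = Finset.univ.card (α := ι) := (Finset.card_univ).symm
  have hsd : (Finset.univ \ Finset.image c Finset.univ).Nonempty := by
    rw [← Finset.card_pos, Finset.card_sdiff_of_subset (Finset.subset_univ _)]
    omega
  obtain ⟨k, hkmem⟩ := hsd
  have hk : k ∉ Finset.image c Finset.univ := (Finset.mem_sdiff.1 hkmem).2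
  -- swap point
  obtain ⟨y, hyX, hy⟩ := exists_swap_point p q hpq (X k) (hX k)
  set f₁ : ∀ i, {x // x ∈ X i} := Function.update f₀ k ⟨y, hyX⟩ with hf₁
  set F₁ : ι → E := fun i => (f₁ i : E) with hF₁
  have hF₁k : F₁ k = y := by simp [hF₁, hf₁]
  have hF₁ne : ∀ i, i ≠ k → F₁ i = F i := by
    intro i hik
    simp [hF₁, hf₁, hF, Function.update_of_ne hik]
  have hzr₁ : Set.range z ⊆ Set.range F₁ := by
    rintro x ⟨i, rfl⟩
    refine ⟨c i, ?_⟩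
    rw [hF₁ne (c i) (fun h => hk (h ▸ Finset.mem_image_of_mem c (Finset.mem_univ i))), hc i]
  have hqK₁ : q ∈ convexHull ℝ (Set.range F₁) := by
    apply convexHull_mono hzr₁
    exact mem_convexHull_of_exists_fintype w z (fun i => (hwpos i).le) hwsum
      (fun i => Set.mem_range_self i) hwz
  have hyK₁ : y ∈ convexHull ℝ (Set.range F₁) :=
    subset_convexHull ℝ _ ⟨k, hF₁k⟩
  -- the improved point
  have hyq : y ≠ q := by
    intro h
    rw [h] at hy
    simp only [sub_self, inner_zero_right] at hy
    nlinarith [hdpos, dist_eq_norm p q]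
  set c0 : ℝ := ⟪p - q, y - q⟫ with hc0def
  have hc0 : 0 < c0 :=
    lt_of_lt_of_le (pow_pos (norm_pos_iff.2 (sub_ne_zero_of_ne hpq)) 2) hy
  have hn2 : 0 < ‖y - q‖ ^ 2 := pow_pos (norm_pos_iff.2 (sub_ne_zero_of_ne hyq)) 2
  set t : ℝ := min 1 (c0 / ‖y - q‖ ^ 2) with ht
  have ht0 : 0 < t := lt_min one_pos (div_pos hc0 hn2)
  have ht1 : t ≤ 1 := min_le_left _ _
  have htn : t * ‖y - q‖ ^ 2 ≤ c0 := by
    have : t ≤ c0 / ‖y - q‖ ^ 2 := min_le_right _ _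
    calc t * ‖y - q‖ ^ 2 ≤ (c0 / ‖y - q‖ ^ 2) * ‖y - q‖ ^ 2 :=
          mul_le_mul_of_nonneg_right this hn2.le
      _ = c0 := div_mul_cancel₀ _ (ne_of_gt hn2)
  set zt : E := q + t • (y - q) with hzt
  clear_value zt
  have hztK₁ : zt ∈ convexHull ℝ (Set.range F₁) := by
    have h1 : zt = (1 - t) • q + t • y := by
      rw [hzt, smul_sub, sub_smul, one_smul]; abel
    rw [h1]
    exact (convex_convexHull ℝ (Set.range F₁)) hqK₁ hyK₁ (by linarith) ht0.le (by ring)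
  have hdist : dist p zt < dist p q := by
    have hexp : ‖p - zt‖ ^ 2 = ‖p - q‖ ^ 2 - 2 * (t * c0) + t ^ 2 * ‖y - q‖ ^ 2 := by
      have : p - zt = (p - q) - t • (y - q) := by rw [hzt]; abel
      rw [this, norm_sub_sq_real, real_inner_smul_right, norm_smul, mul_pow, Real.norm_eq_abs, sq_abs,
        ← hc0def]
    have hlt2 : ‖p - zt‖ ^ 2 < ‖p - q‖ ^ 2 := by
      rw [hexp]
      nlinarith [ht0, htn, hc0]
    rw [dist_eq_norm, dist_eq_norm]
    nlinarith [norm_nonneg (p - zt), norm_nonneg (p - q)]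
  have hfin : g f₁ < g f₀ := by
    calc g f₁ ≤ dist p zt := Metric.infDist_le_dist_of_mem hztK₁
      _ < dist p q := hdist
      _ = g f₀ := hq.symm
  exact absurd (hf₀ f₁) (not_le.2 hfin)



lemma sum_ite_fin {r : ℕ} (c : Fin r → ℝ) (k : ℕ) (hk : k < r) :
    ∑ j : Fin r, c j * (if (j : ℕ) = k then 1 else 0) = c ⟨k, hk⟩ := by
  rw [Finset.sum_eq_single ⟨k, hk⟩]
  · simp
  · intro j _ hj
    have : (j : ℕ) ≠ k := fun h => hj (Fin.ext h)
    simp [this]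
  · intro h
    exact absurd (Finset.mem_univ _) h


theorem statement18 (d r : ℕ) (hd : 1 ≤ d) (hr : 2 ≤ r)
    (P : Finset (Pt d)) (hP : P.card = (d + 1) * (r - 1) + 1) :
    ∃ Q : Fin r → Finset (Pt d), (∀ i, Q i ⊆ P) ∧
      (∀ i j, i ≠ j → Disjoint (Q i) (Q j)) ∧
      (∀ x ∈ P, ∃ i, x ∈ Q i) ∧
      (⋂ i : Fin r, convexHull ℝ ((Q i : Set (Pt d)))).Nonempty := by
  classical
  set n : ℕ := (d + 1) * (r - 1) with hn
  set m : ℕ := n + 1 with hm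
  have hr1 : 1 ≤ r - 1 := by omega
  have hrpos : 0 < r := by omega
  have hPm : P.card = m := by omega
  -- enumerate the points
  set a : Fin m → Pt d := fun i => (P.equivFin.symm (Fin.cast hPm.symm i) : Pt d) with ha
  have ha_mem : ∀ i, a i ∈ P := fun i => (P.equivFin.symm (Fin.cast hPm.symm i)).2
  have ha_inj : Function.Injective a := by
    intro i j hij
    have := P.equivFin.symm.injective (Subtype.ext hij)
    simpa [Fin.ext_iff] using congrArg Fin.val this
  have ha_surj : ∀ x ∈ P, ∃ i, a i = x := by
    intro x hx
    refine ⟨Fin.cast hPm (P.equivFin ⟨x, hx⟩), ?_⟩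
    simp [ha]
  -- lifted points and auxiliary vectors
  set b : Fin m → Fin (d + 1) → ℝ :=
    fun i s => if h : (s : ℕ) < d then a i ⟨s, h⟩ else 1 with hb
  set v : Fin r → Fin (r - 1) → ℝ :=
    fun j t => (if (j : ℕ) = (t : ℕ) then 1 else 0) +
      (if (j : ℕ) = r - 1 then -1 else 0) with hv
  set lastr : Fin r := ⟨r - 1, by omega⟩ with hlastr
  -- key linear algebra fact about v
  have hsplit : ∀ (c : Fin r → ℝ) (t : Fin (r - 1)),
      ∑ j : Fin r, c j * v j t = c ⟨(t : ℕ), by omega⟩ - c lastr := by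
    intro c t
    have h1 : ∀ j : Fin r, c j * v j t =
        c j * (if (j : ℕ) = (t : ℕ) then 1 else 0) -
          c j * (if (j : ℕ) = r - 1 then 1 else 0) := by
      intro j
      simp only [hv]
      split_ifs <;> ring
    simp only [h1]
    rw [Finset.sum_sub_distrib, sum_ite_fin c (t : ℕ) (by omega),
      sum_ite_fin c (r - 1) (by omega)]
  have hrel : ∀ c : Fin r → ℝ, (∀ t : Fin (r - 1), ∑ j : Fin r, c j * v j t = 0) →
      ∀ j : Fin r, c j = c lastr := by
    intro c hc j
    rcases Nat.lt_or_ge (j : ℕ) (r - 1) with hj | hj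
    · have := hc ⟨(j : ℕ), hj⟩
      rw [hsplit] at this
      have hje : (⟨(j : ℕ), by omega⟩ : Fin r) = j := Fin.ext rfl
      rw [hje] at this
      linarith
    · have : (j : ℕ) = r - 1 := by omega
      congr 1
      exact Fin.ext this
  have hv_sum : ∀ t : Fin (r - 1), ∑ j : Fin r, v j t = 0 := by
    intro t
    have h1 : ∀ j : Fin r, v j t = (1 : ℝ) * v j t := fun j => (one_mul _).symm
    calc ∑ j : Fin r, v j t = ∑ j : Fin r, (fun _ : Fin r => (1:ℝ)) j * v j t := by
          simp
      _ = 1 - 1 := hsplit (fun _ => 1) t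
      _ = 0 := by ring
  -- the big space
  set L : EuclideanSpace ℝ (Fin (d + 1) × Fin (r - 1)) ≃ₗ[ℝ]
      ((Fin (d + 1) × Fin (r - 1)) → ℝ) :=
    WithLp.linearEquiv 2 ℝ _ with hL
  set tsr : Fin r → Fin m → EuclideanSpace ℝ (Fin (d + 1) × Fin (r - 1)) :=
    fun j i => L.symm (fun st => v j st.2 * b i st.1) with htsr
  set X : Fin m → Finset (EuclideanSpace ℝ (Fin (d + 1) × Fin (r - 1))) :=
    fun i => Finset.image (fun j => tsr j i) Finset.univ with hX
  have hX0 : ∀ i, (0 : EuclideanSpace ℝ (Fin (d + 1) × Fin (r - 1))) ∈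
      convexHull ℝ ((X i : Set (EuclideanSpace ℝ (Fin (d + 1) × Fin (r - 1))))) := by
    intro i
    apply mem_convexHull_of_exists_fintype (fun _ : Fin r => (r : ℝ)⁻¹) (fun j => tsr j i)
    · intro j; positivity
    · rw [Finset.sum_const, Finset.card_univ, Fintype.card_fin, nsmul_eq_mul]
      field_simp
    · intro j
      exact Finset.mem_coe.2 (Finset.mem_image_of_mem _ (Finset.mem_univ j))
    · simp only [htsr]
      simp only [← map_smul, ← map_sum]
      rw [show (0 : EuclideanSpace ℝ (Fin (d + 1) × Fin (r - 1))) = L.symm 0 from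
        (map_zero L.symm).symm]
      congr 1
      funext st
      rw [Finset.sum_apply]
      simp only [Pi.smul_apply, smul_eq_mul]
      rw [← Finset.mul_sum, ← Finset.sum_mul, hv_sum st.2, zero_mul, mul_zero]
      rfl
  -- colorful caratheodory
  have hfrB : finrank ℝ (EuclideanSpace ℝ (Fin (d + 1) × Fin (r - 1))) <
      Fintype.card (Fin m) := by
    rw [finrank_euclideanSpace, Fintype.card_prod, Fintype.card_fin, Fintype.card_fin,
      Fintype.card_fin]
    omega
  obtain ⟨f, hfX, hf0⟩ := colorful_caratheodory hfrB X 0 hX0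
  have hJ : ∀ i, ∃ j : Fin r, tsr j i = f i := by
    intro i
    have := hfX i
    simp only [hX] at this
    obtain ⟨j, _, hj⟩ := Finset.mem_image.1 this
    exact ⟨j, hj⟩
  choose J hJ using hJ
  -- convex combination weights
  rw [convexHull_range_eq_exists_affineCombination] at hf0
  obtain ⟨s, w, hw0, hw1, hwc⟩ := hf0
  rw [affineCombination_eq_linear_combination s f w hw1] at hwc
  set lam : Fin m → ℝ := fun i => if i ∈ s then w i else 0 with hlam
  have hlam0 : ∀ i, 0 ≤ lam i := by
    intro i
    simp only [hlam]
    split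
    · exact hw0 i ‹_›
    · exact le_refl 0
  have hlam1 : ∑ i, lam i = 1 := by
    simp only [hlam]
    rw [Finset.sum_ite_mem, Finset.univ_inter]
    exact hw1
  have hlamf : ∑ i, lam i • f i = 0 := by
    simp only [hlam, ite_smul, zero_smul]
    rw [Finset.sum_ite_mem, Finset.univ_inter]
    exact hwc
  -- coordinates
  have h0 : ∀ st : Fin (d + 1) × Fin (r - 1),
      ∑ i : Fin m, lam i * (v (J i) st.2 * b i st.1) = 0 := by
    intro st
    have h1 := congrArg L hlamf
    rw [map_sum, map_zero] at h1
    have h2 : ∀ i, L (lam i • f i) = lam i • (fun st => v (J i) st.2 * b i st.1) := by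
      intro i
      rw [map_smul, ← hJ i]
      simp only [htsr, LinearEquiv.apply_symm_apply]
    rw [Finset.sum_congr rfl (fun i _ => h2 i)] at h1
    have h3 := congrFun h1 st
    rw [Finset.sum_apply] at h3
    simpa using h3
  -- regroup
  set Tj : Fin r → Finset (Fin m) := fun j => Finset.univ.filter (fun i => J i = j) with hTj
  have hgroup : ∀ (sc : Fin (d + 1)) (t : Fin (r - 1)),
      ∑ j : Fin r, (∑ i ∈ Tj j, lam i * b i sc) * v j t = 0 := by
    intro sc t
    have h1 : ∑ j : Fin r, ∑ i ∈ Tj j, lam i * (v (J i) t * b i sc)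
        = ∑ i : Fin m, lam i * (v (J i) t * b i sc) :=
      Finset.sum_fiberwise Finset.univ J (fun i => lam i * (v (J i) t * b i sc))
    rw [← h0 (sc, t), ← h1]
    apply Finset.sum_congr rfl
    intro j _
    rw [Finset.sum_mul]
    apply Finset.sum_congr rfl
    intro i hi
    have : J i = j := (Finset.mem_filter.1 hi).2
    rw [this]
    ring
  set Cs : Fin (d + 1) → ℝ := fun sc => ∑ i ∈ Tj lastr, lam i * b i sc with hCs
  have hC : ∀ (j : Fin r) (sc : Fin (d + 1)), ∑ i ∈ Tj j, lam i * b i sc = Cs sc := by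
    intro j sc
    exact hrel (fun j => ∑ i ∈ Tj j, lam i * b i sc) (fun t => hgroup sc t) j
  -- the weight sums
  have hblast : ∀ i, b i ⟨d, by omega⟩ = 1 := by
    intro i
    simp only [hb]
    simp
  have hmu : ∀ j : Fin r, ∑ i ∈ Tj j, lam i = Cs ⟨d, by omega⟩ := by
    intro j
    rw [← hC j ⟨d, by omega⟩]
    apply Finset.sum_congr rfl
    intro i _
    rw [hblast i, mul_one]
  have hmuval : Cs ⟨d, by omega⟩ = (r : ℝ)⁻¹ := by
    have h1 : ∑ j : Fin r, ∑ i ∈ Tj j, lam i = 1 := by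
      rw [Finset.sum_fiberwise Finset.univ J lam]
      exact hlam1
    rw [Finset.sum_congr rfl (fun j _ => hmu j), Finset.sum_const, Finset.card_univ,
      Fintype.card_fin, nsmul_eq_mul] at h1
    field_simp at h1 ⊢
    linarith
  -- per-coordinate identity with a
  have hba : ∀ (i : Fin m) (s' : Fin d), b i ⟨(s' : ℕ), by omega⟩ = a i s' := by
    intro i s'
    simp only [hb]
    rw [dif_pos s'.2]
  have hCa : ∀ (j : Fin r) (s' : Fin d),
      ∑ i ∈ Tj j, lam i * a i s' = Cs ⟨(s' : ℕ), by omega⟩ := by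
    intro j s'
    rw [← hC j ⟨(s' : ℕ), by omega⟩]
    apply Finset.sum_congr rfl
    intro i _
    rw [hba i s']
  -- the common point
  set x : Pt d := fun s' => (r : ℝ) * Cs ⟨(s' : ℕ), by omega⟩ with hx
  set Q : Fin r → Finset (Pt d) := fun j => (Tj j).image a with hQ
  have hcm : ∀ j, x ∈ convexHull ℝ ((Q j : Set (Pt d))) := by
    intro j
    have hsum : ∑ i ∈ Tj j, lam i = (r : ℝ)⁻¹ := by rw [hmu j, hmuval]
    have h1 : (Tj j).centerMass lam a ∈ convexHull ℝ ((Q j : Set (Pt d))) := by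
      apply Finset.centerMass_mem_convexHull
      · intro i _; exact hlam0 i
      · rw [hsum]; positivity
      · intro i hi
        exact Finset.mem_coe.2 (Finset.mem_image_of_mem a hi)
    have h2 : (Tj j).centerMass lam a = x := by
      rw [Finset.centerMass, hsum]
      funext s'
      rw [Pi.smul_apply, Finset.sum_apply]
      simp only [Pi.smul_apply, smul_eq_mul]
      rw [inv_inv]
      simp only [hx]
      rw [← hCa j s', Finset.mul_sum]
    rwa [h2] at h1
  refine ⟨Q, ?_, ?_, ?_, ?_⟩
  · intro j y hy
    simp only [hQ] at hy
    obtain ⟨i, _, rfl⟩ := Finset.mem_image.1 hy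
    exact ha_mem i
  · intro j1 j2 hne
    rw [Finset.disjoint_left]
    intro y hy1 hy2
    obtain ⟨i1, hi1, rfl⟩ := Finset.mem_image.1 hy1
    obtain ⟨i2, hi2, he⟩ := Finset.mem_image.1 hy2
    have : i2 = i1 := ha_inj he
    subst this
    have e1 : J i2 = j1 := (Finset.mem_filter.1 hi1).2
    have e2 : J i2 = j2 := (Finset.mem_filter.1 hi2).2
    exact hne (e1 ▸ e2 ▸ rfl)
  · intro y hy
    obtain ⟨i, rfl⟩ := ha_surj y hy
    exact ⟨J i, Finset.mem_image_of_mem a (Finset.mem_filter.2 ⟨Finset.mem_univ i, rfl⟩)⟩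
  · exact ⟨x, Set.mem_iInter.2 hcm⟩
end
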